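/- arXiv:2103.15453 — 2 statements merged into one kernel-verified Lean document; each statement's English description precedes it below -/
import Mathlib

section
/- For a concrete arena A, two alternating prestrategies σ, τ on A satisfy σ ≈ τ (the AJM-style uniformity bisimulation equivalence) if and only if their pointer collapses coincide: 𝒫(σ) = 𝒫(τ). -/
set_option autoImplicit false

/-- Immediate causality `a ⋗ b` for a relation `le`. -/
def immOf {α : Type} (le : α → α → Prop) (a b : α) : Prop :=
  le a b ∧ a ≠ b ∧ ∀ c, le a c → le c b → c = a ∨ c = b

/-- Configurations: finite, down-closed, consistent sets. -/
def ConfigOf {α : Type} (le conflict : α → α → Prop) (x : Set α) : Prop :=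
  x.Finite ∧ (∀ e ∈ x, ∀ e', le e' e → e' ∈ x) ∧ ∀ e ∈ x, ∀ e' ∈ x, ¬ conflict e e'

/-- Minimality for a causal dependency relation. -/
def MinimalOf {α : Type} (le : α → α → Prop) (a : α) : Prop := ∀ a', le a' a → a' = a

/-- A set of pairs is the graph of a bijection between its domain and codomain. -/
def IsBijGraph {α : Type} (θ : Set (α × α)) : Prop :=
  ∀ p ∈ θ, ∀ q ∈ θ, ((p : α × α).1 = q.1 ↔ p.2 = q.2)

def symDom {α : Type} (θ : Set (α × α)) : Set α := Prod.fst '' θ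

def symCod {α : Type} (θ : Set (α × α)) : Set α := Prod.snd '' θ

/-- An arena with symmetry: an alternating, forestial, race-free event structure
with polarities (`true` = Player `+`, `false` = Opponent `−`), equipped with an
isomorphism family `Sym` of (graphs of) polarity-preserving bijections between
configurations, closed under identities, inverse, composition, restriction and
extension. -/
structure ArenaS (α : Type) where
  le : α → α → Prop
  conflict : α → α → Prop
  pol : α → Bool
  le_refl : ∀ e, le e e
  le_trans : ∀ {a b c : α}, le a b → le b c → le a c
  le_antisymm : ∀ {a b : α}, le a b → le b a → a = b
  finite_causes : ∀ e : α, Set.Finite {e' | le e' e}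
  conflict_irrefl : ∀ e, ¬ conflict e e
  conflict_symm : ∀ {a b : α}, conflict a b → conflict b a
  conflict_inherit : ∀ {a b b' : α}, conflict a b → le b b' → conflict a b'
  alternating : ∀ {a b : α}, immOf le a b → pol a ≠ pol b
  forestial : ∀ {a1 a2 a : α}, le a1 a → le a2 a → le a1 a2 ∨ le a2 a1
  race_free : ∀ {a1 a2 : α}, conflict a1 a2 →
    (∀ a1' a2', le a1' a1 → le a2' a2 → conflict a1' a2' → a1' = a1 ∧ a2' = a2) →
    pol a1 = pol a2
  Sym : Set (Set (α × α))
  sym_graph : ∀ θ ∈ Sym, IsBijGraph θ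
  sym_dom : ∀ θ ∈ Sym, ConfigOf le conflict (symDom θ)
  sym_cod : ∀ θ ∈ Sym, ConfigOf le conflict (symCod θ)
  sym_pol : ∀ θ ∈ Sym, ∀ p ∈ θ, pol (p : α × α).1 = pol p.2
  sym_id : ∀ x : Set α, ConfigOf le conflict x → {p : α × α | p.1 ∈ x ∧ p.2 = p.1} ∈ Sym
  sym_inv : ∀ θ ∈ Sym, Prod.swap '' θ ∈ Sym
  sym_comp : ∀ θ ∈ Sym, ∀ θ' ∈ Sym, symCod θ = symDom θ' →
    {p : α × α | ∃ b, (p.1, b) ∈ θ ∧ (b, p.2) ∈ θ'} ∈ Sym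
  sym_restrict : ∀ θ ∈ Sym, ∀ x : Set α, ConfigOf le conflict x → x ⊆ symDom θ →
    ∃ θ' ∈ Sym, θ' ⊆ θ ∧ symDom θ' = x
  sym_ext : ∀ θ ∈ Sym, ∀ x : Set α, ConfigOf le conflict x → symDom θ ⊆ x →
    ∃ θ' ∈ Sym, θ ⊆ θ' ∧ symDom θ' = x

/-- An alternating play: valid, non-repetitive, alternating, negative start. -/
def AltPlayOf {α : Type} (le conflict : α → α → Prop) (pol : α → Bool) (s : List α) : Prop :=
  (∀ t, t <+: s → ConfigOf le conflict {a | a ∈ t}) ∧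
  s.Nodup ∧
  (∀ (i : ℕ) (a b : α), s[i]? = some a → s[i + 1]? = some b → pol a ≠ pol b) ∧
  (∀ a : α, s[0]? = some a → pol a = false)

/-- The pointwise pairing of the length-`k` prefixes of two sequences. -/
def pairingUpTo {α : Type} (s t : List α) (k : ℕ) : Set (α × α) :=
  {p | ∃ i < k, s[i]? = some p.1 ∧ t[i]? = some p.2}

/-- Two plays are symmetric when they have the same length and the pointwise
pairing of each pair of prefixes is a symmetry. -/
def PlaySymOf {α : Type} (Sym : Set (Set (α × α))) (s t : List α) : Prop :=
  s.length = t.length ∧ ∀ k ≤ s.length, pairingUpTo s t k ∈ Sym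

/-- A meager arena: a forestial alternating partial order with polarities,
without conflict or symmetry. -/
structure Meager (β : Type) where
  le : β → β → Prop
  pol : β → Bool
  le_refl : ∀ e, le e e
  le_trans : ∀ {a b c : β}, le a b → le b c → le a c
  le_antisymm : ∀ {a b : β}, le a b → le b a → a = b
  alternating : ∀ {a b : β}, immOf le a b → pol a ≠ pol b
  forestial : ∀ {a1 a2 a : β}, le a1 a → le a2 a → le a1 a2 ∨ le a2 a1

/-- A concrete arena `(A, A⁰, lbl)`: an arena with symmetry `A`, a meager arena
`M = A⁰`, and a polarity-preserving label function which is rigid (preserves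
minimality and immediate causality), locally pointed, and transparent (a bijection
between configurations is a symmetry iff it is an order-isomorphism preserving
labels). -/
structure Concrete (α β : Type) where
  A : ArenaS α
  M : Meager β
  lbl : α → β
  lbl_pol : ∀ a : α, M.pol (lbl a) = A.pol a
  locally_pointed : ∀ x : Set α, ConfigOf A.le A.conflict x → ∀ a ∈ x, ∀ a' ∈ x,
      MinimalOf A.le a → MinimalOf A.le a' → A.pol a = A.pol a' → a = a'
  rigid_min : ∀ a : α, MinimalOf A.le a → MinimalOf M.le (lbl a)
  rigid_imm : ∀ a b : α, immOf A.le a b → immOf M.le (lbl a) (lbl b)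
  transparent : ∀ θ : Set (α × α), IsBijGraph θ →
      ConfigOf A.le A.conflict (symDom θ) → ConfigOf A.le A.conflict (symCod θ) →
      (θ ∈ A.Sym ↔
        ((∀ p ∈ θ, ∀ q ∈ θ, (A.le (p : α × α).1 (q : α × α).1 ↔ A.le p.2 q.2)) ∧
          ∀ p ∈ θ, lbl (p : α × α).1 = lbl p.2))

-- The pointer annotation obtained from the arena's immediate causality: `ptrOf le
-- s j` is an index `i < j` carrying the immediate causal predecessor of `s_j`
-- (when one exists).
open Classical in
noncomputable def ptrOf {α : Type} (le : α → α → Prop) (s : List α) (j : ℕ) : ℕ :=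
  if h : ∃ i, i < j ∧ ∃ a b, s[i]? = some a ∧ s[j]? = some b ∧ immOf le a b then
    h.choose
  else 0

/-- Two plays have the same image under the pointer collapse `𝒫`: equal label
sequences, and equal pointers at every non-minimal occurrence. -/
def PImageEq {α β : Type} (C : Concrete α β) (s t : List α) : Prop :=
  s.map C.lbl = t.map C.lbl ∧
  ∀ (j : ℕ) (a : α), s[j]? = some a → ¬ MinimalOf C.A.le a →
    ptrOf C.A.le s j = ptrOf C.A.le t j

/-- An alternating prestrategy: non-empty, prefix-closed, deterministic set of
alternating plays. -/
def PrestratOf {α : Type} (le conflict : α → α → Prop) (pol : α → Bool)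
    (σ : Set (List α)) : Prop :=
  ([] ∈ σ) ∧ (∀ s t : List α, s <+: t → t ∈ σ → s ∈ σ) ∧
  (∀ s ∈ σ, AltPlayOf le conflict pol s) ∧
  (∀ (s : List α) (a b : α), pol a = true → pol b = true →
      s ++ [a] ∈ σ → s ++ [b] ∈ σ → a = b)

/-- The AJM-style uniformity bisimulation `σ ≈ τ`: positive extensions on one side
can be matched by symmetric positive extensions on the other (→/←-simulation), and
symmetric negative extensions are transferred (→/←-receptivity). -/
def UnifOf {α : Type} (Sym : Set (Set (α × α))) (pol : α → Bool)
    (σ τ : Set (List α)) : Prop :=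
  (∀ (s : List α) (a : α), pol a = true → s ++ [a] ∈ σ → ∀ t ∈ τ, PlaySymOf Sym s t →
      ∃ b, pol b = true ∧ t ++ [b] ∈ τ ∧ PlaySymOf Sym (s ++ [a]) (t ++ [b])) ∧
  (∀ (t : List α) (b : α), pol b = true → t ++ [b] ∈ τ → ∀ s ∈ σ, PlaySymOf Sym s t →
      ∃ a, pol a = true ∧ s ++ [a] ∈ σ ∧ PlaySymOf Sym (s ++ [a]) (t ++ [b])) ∧
  (∀ (s t : List α) (a b : α), pol a = false → s ++ [a] ∈ σ → t ∈ τ →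
      PlaySymOf Sym (s ++ [a]) (t ++ [b]) → t ++ [b] ∈ τ) ∧
  (∀ (s t : List α) (a b : α), pol b = false → t ++ [b] ∈ τ → s ∈ σ →
      PlaySymOf Sym (s ++ [a]) (t ++ [b]) → s ++ [a] ∈ σ)

/-! Symmetric plays are exactly the plays with the same pointer collapse. By transparency a
symmetry is a label-preserving order-isomorphism, so it preserves immediate causality and hence
pointers; conversely, in a forest causality is reachability along immediate predecessors, so equal
labels and pointers determine the causal order of the plays and, by transparency again, make their
pairing a symmetry. Uniformity `σ ≈ τ` splits into a transfer of plays from `σ` to `τ` and one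
back; when `τ ≈ τ`, a transfer from `σ` to `τ` amounts to every play of `σ` having a
symmetric partner in `τ`, built move by move by extending symmetries along Opponent moves. -/

section

variable {α β : Type}

theorem List.Nodup.eq_of_getElem?_eq_some {l : List α} (h : l.Nodup) {i j : ℕ} {a : α}
    (hi : l[i]? = some a) (hj : l[j]? = some a) : i = j :=
  (List.getElem?_inj (List.getElem?_eq_some_iff.mp hi).1 h).1 (hi.trans hj.symm)

theorem List.exists_getElem?_eq_some_of_length_eq {s t : List α} (h : s.length = t.length)
    {i : ℕ} {a : α} (ha : s[i]? = some a) : ∃ b, t[i]? = some b :=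
  ⟨_, List.getElem?_eq_getElem (h ▸ (List.getElem?_eq_some_iff.mp ha).1)⟩

theorem IsBijGraph.eq_of_fst_eq {θ : Set (α × α)} (h : IsBijGraph θ) {p q : α × α}
    (hp : p ∈ θ) (hq : q ∈ θ) (e : p.1 = q.1) : p = q :=
  Prod.ext e ((h p hp q hq).1 e)

namespace ArenaS

variable (A : ArenaS α)

theorem exists_immOf_of_not_minimalOf {b : α} (h : ¬ MinimalOf A.le b) :
    ∃ m, immOf A.le m b := by
  let S := {e | A.le e b ∧ e ≠ b}
  have hS : S.Finite := (A.finite_causes b).subset fun e he => he.1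
  have hne : S.Nonempty := by
    simp only [MinimalOf, not_forall] at h
    obtain ⟨e, he, hne⟩ := h
    exact ⟨e, he, hne⟩
  -- a strict cause of `b` with the most causes is an immediate one
  obtain ⟨m, ⟨hmb, hmne⟩, hmax⟩ := S.exists_max_image (fun e => {c | A.le c e}.ncard) hS hne
  refine ⟨m, hmb, hmne, fun c hmc hcb => ?_⟩
  by_contra! hc
  have hlt : {x | A.le x m} ⊂ {x | A.le x c} :=
    ⟨fun x hx => A.le_trans hx hmc, fun hsub => hc.1 (A.le_antisymm (hsub (A.le_refl c)) hmc)⟩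
  exact (Set.ncard_lt_ncard hlt (A.finite_causes c)).not_ge (hmax c ⟨hcb, hc.2⟩)

theorem immOf_unique {m m' b : α} (h : immOf A.le m b) (h' : immOf A.le m' b) : m = m' := by
  rcases A.forestial h.1 h'.1 with hle | hle
  · exact ((h.2.2 m' hle h'.1).resolve_right h'.2.1).symm
  · exact (h'.2.2 m hle h.1).resolve_right h.2.1

end ArenaS

namespace Concrete

variable (C : Concrete α β)

theorem minimalOf_lbl_iff (a : α) : MinimalOf C.M.le (C.lbl a) ↔ MinimalOf C.A.le a := by
  refine ⟨fun h => ?_, C.rigid_min a⟩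
  by_contra ha
  obtain ⟨m, hm⟩ := C.A.exists_immOf_of_not_minimalOf ha
  have hm' := C.rigid_imm m a hm
  exact hm'.2.1 (h _ hm'.1)

variable {C} {θ : Set (α × α)}

theorem le_iff_of_mem_sym (hθ : θ ∈ C.A.Sym) {p q : α × α} (hp : p ∈ θ) (hq : q ∈ θ) :
    C.A.le p.1 q.1 ↔ C.A.le p.2 q.2 :=
  ((C.transparent θ (C.A.sym_graph θ hθ) (C.A.sym_dom θ hθ) (C.A.sym_cod θ hθ)).1 hθ).1
    p hp q hq

theorem lbl_eq_of_mem_sym (hθ : θ ∈ C.A.Sym) {p : α × α} (hp : p ∈ θ) :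
    C.lbl p.1 = C.lbl p.2 :=
  ((C.transparent θ (C.A.sym_graph θ hθ) (C.A.sym_dom θ hθ) (C.A.sym_cod θ hθ)).1 hθ).2 p hp

theorem immOf_of_mem_sym (hθ : θ ∈ C.A.Sym) {m m' b b' : α} (hm : (m, m') ∈ θ)
    (hb : (b, b') ∈ θ) (h : immOf C.A.le m b) : immOf C.A.le m' b' := by
  have hbij := C.A.sym_graph θ hθ
  refine ⟨(le_iff_of_mem_sym hθ hm hb).1 h.1, fun e => h.2.1 ((hbij _ hm _ hb).2 e),
    fun c hmc hcb => ?_⟩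
  obtain ⟨⟨d, c⟩, hd, rfl⟩ := (C.A.sym_cod θ hθ).2.1 b' ⟨_, hb, rfl⟩ c hcb
  exact (h.2.2 d ((le_iff_of_mem_sym hθ hm hd).2 hmc) ((le_iff_of_mem_sym hθ hd hb).2 hcb)).imp
    (hbij _ hd _ hm).1 (hbij _ hd _ hb).1

end Concrete

section pairingUpTo

variable {s t u : List α} {k : ℕ}

theorem isBijGraph_pairingUpTo (hs : s.Nodup) (ht : t.Nodup) (k : ℕ) :
    IsBijGraph (pairingUpTo s t k) := by
  rintro ⟨a, a'⟩ ⟨i, -, h1, h2⟩ ⟨b, b'⟩ ⟨j, -, h3, h4⟩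
  dsimp only
  constructor
  · rintro rfl
    obtain rfl := hs.eq_of_getElem?_eq_some h1 h3
    exact Option.some.inj (h2.symm.trans h4)
  · rintro rfl
    obtain rfl := ht.eq_of_getElem?_eq_some h2 h4
    exact Option.some.inj (h1.symm.trans h3)

theorem image_swap_pairingUpTo : Prod.swap '' pairingUpTo s t k = pairingUpTo t s k := by
  ext ⟨x, y⟩
  simp only [Set.mem_image, Prod.exists, Prod.swap_prod_mk, Prod.mk.injEq]
  constructor
  · rintro ⟨y, x, ⟨i, hi, h1, h2⟩, rfl, rfl⟩
    exact ⟨i, hi, h2, h1⟩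
  · rintro ⟨i, hi, h1, h2⟩
    exact ⟨y, x, ⟨i, hi, h2, h1⟩, rfl, rfl⟩

theorem symDom_pairingUpTo (hk : k ≤ t.length) :
    symDom (pairingUpTo s t k) = {a | a ∈ s.take k} := by
  ext a
  simp only [symDom, Set.mem_image, Set.mem_ofPred_eq, List.mem_iff_getElem?, List.getElem?_take]
  constructor
  · rintro ⟨p, ⟨i, hik, h1, -⟩, rfl⟩
    exact ⟨i, by rw [if_pos hik, h1]⟩
  · rintro ⟨i, hi⟩
    split_ifs at hi with hik
    exact ⟨(a, t[i]), ⟨i, hik, hi, List.getElem?_eq_getElem (by omega)⟩, rfl⟩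

theorem symCod_pairingUpTo (hk : k ≤ s.length) :
    symCod (pairingUpTo s t k) = {a | a ∈ t.take k} := by
  rw [symCod, ← image_swap_pairingUpTo, Set.image_image, ← symDom_pairingUpTo hk]
  rfl

theorem pairingUpTo_comp (ht : t.Nodup) (hk : k ≤ t.length) :
    {p : α × α | ∃ b, (p.1, b) ∈ pairingUpTo s t k ∧ (b, p.2) ∈ pairingUpTo t u k} =
      pairingUpTo s u k := by
  ext ⟨x, y⟩
  constructor
  · rintro ⟨b, ⟨i, hik, hi1, hi2⟩, ⟨j, -, hj1, hj2⟩⟩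
    obtain rfl := ht.eq_of_getElem?_eq_some hi2 hj1
    exact ⟨i, hik, hi1, hj2⟩
  · rintro ⟨i, hik, hi1, hi2⟩
    have hi : t[i]? = some t[i] := List.getElem?_eq_getElem (by omega)
    exact ⟨t[i], ⟨i, hik, hi1, hi⟩, ⟨i, hik, hi, hi2⟩⟩

theorem pairingUpTo_append_singleton (a b : α) (hs : k ≤ s.length) (ht : k ≤ t.length) :
    pairingUpTo (s ++ [a]) (t ++ [b]) k = pairingUpTo s t k := by
  ext p
  refine exists_congr fun i => and_congr_right fun hik => ?_
  rw [List.getElem?_append_left (by omega), List.getElem?_append_left (by omega)]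

theorem pairingUpTo_append_singleton_length (h : s.length = t.length) (a b : α) :
    pairingUpTo (s ++ [a]) (t ++ [b]) (s.length + 1) =
      insert (a, b) (pairingUpTo s t s.length) := by
  ext ⟨x, y⟩
  constructor
  · rintro ⟨i, hi, h1, h2⟩
    rcases Nat.lt_succ_iff_lt_or_eq.1 hi with hi | rfl
    · rw [List.getElem?_append_left hi] at h1
      rw [List.getElem?_append_left (h ▸ hi)] at h2
      exact Or.inr ⟨i, hi, h1, h2⟩
    · rw [List.getElem?_concat_length] at h1
      rw [h, List.getElem?_concat_length] at h2
      cases h1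
      cases h2
      exact Or.inl rfl
  · rintro (hp | ⟨i, hi, h1, h2⟩)
    · cases hp
      exact ⟨s.length, by omega, List.getElem?_concat_length,
        by rw [h, List.getElem?_concat_length]⟩
    · exact ⟨i, by omega, by rw [List.getElem?_append_left hi, h1],
        by rw [List.getElem?_append_left (h ▸ hi), h2]⟩

theorem playSymOf_append_singleton_iff {Sym : Set (Set (α × α))} {a b : α} :
    PlaySymOf Sym (s ++ [a]) (t ++ [b]) ↔
      PlaySymOf Sym s t ∧ insert (a, b) (pairingUpTo s t s.length) ∈ Sym := by
  constructor
  · rintro ⟨hlen, hsym⟩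
    have hlen' : s.length = t.length := by simpa using hlen
    refine ⟨⟨hlen', fun k hk => ?_⟩, ?_⟩
    · rw [← pairingUpTo_append_singleton a b hk (hlen' ▸ hk)]
      exact hsym k (by simp; omega)
    · rw [← pairingUpTo_append_singleton_length hlen']
      exact hsym _ (by simp)
  · rintro ⟨⟨hlen, hsym⟩, hlast⟩
    refine ⟨by simp [hlen], fun k hk => ?_⟩
    rcases (show k ≤ s.length ∨ k = s.length + 1 by simp at hk; omega) with hk | rfl
    · rw [pairingUpTo_append_singleton a b hk (hlen ▸ hk)]
      exact hsym k hk
    · rwa [pairingUpTo_append_singleton_length hlen]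

end pairingUpTo

theorem ArenaS.playSymOf_nil (A : ArenaS α) : PlaySymOf A.Sym [] [] := by
  refine ⟨rfl, fun k _ => ?_⟩
  convert A.sym_id ∅ ⟨Set.finite_empty, by simp, by simp⟩ using 1
  ext p
  simp [pairingUpTo]

namespace PlaySymOf

variable {A : ArenaS α} {s t u : List α} {a b : α}

theorem symm (h : PlaySymOf A.Sym s t) : PlaySymOf A.Sym t s :=
  ⟨h.1.symm, fun k hk => image_swap_pairingUpTo ▸ A.sym_inv _ (h.2 k (h.1 ▸ hk))⟩

theorem trans (ht : t.Nodup) (h₁ : PlaySymOf A.Sym s t) (h₂ : PlaySymOf A.Sym t u) :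
    PlaySymOf A.Sym s u := by
  refine ⟨h₁.1.trans h₂.1, fun k hk => ?_⟩
  have hkt : k ≤ t.length := h₁.1 ▸ hk
  rw [← pairingUpTo_comp ht hkt]
  exact A.sym_comp _ (h₁.2 k hk) _ (h₂.2 k hkt)
    (by rw [symCod_pairingUpTo hk, symDom_pairingUpTo (h₂.1 ▸ hkt)])

theorem pol_eq (h : PlaySymOf A.Sym (s ++ [a]) (t ++ [b])) : A.pol a = A.pol b :=
  A.sym_pol _ (playSymOf_append_singleton_iff.1 h).2 (a, b) (Set.mem_insert _ _)

theorem exists_append_singleton (h : PlaySymOf A.Sym s t)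
    (hx : ConfigOf A.le A.conflict {c | c ∈ s ++ [a]}) :
    ∃ b, PlaySymOf A.Sym (s ++ [a]) (t ++ [b]) := by
  have hdom : symDom (pairingUpTo s t s.length) = {c | c ∈ s} := by
    rw [symDom_pairingUpTo h.1.le, List.take_length]
  obtain ⟨θ, hθ, hsub, hθdom⟩ := A.sym_ext _ (h.2 _ le_rfl) _ hx
    (by rw [hdom]; exact fun c hc => List.mem_append_left _ hc)
  obtain ⟨⟨a', b⟩, hab, rfl⟩ : a ∈ symDom θ := by simp [hθdom]
  refine ⟨b, playSymOf_append_singleton_iff.2 ⟨h, ?_⟩⟩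
  -- `θ` is a bijection whose domain is `s ++ [a]`, so it adds only `(a', b)` to the pairing
  convert hθ using 1
  have hbij := A.sym_graph θ hθ
  ext p
  refine ⟨by rintro (rfl | hp); exacts [hab, hsub hp], fun hp => ?_⟩
  rcases List.mem_append.1 (show p.1 ∈ {c | c ∈ s ++ [a']} from hθdom ▸ ⟨p, hp, rfl⟩)
    with hs | ha
  · obtain ⟨q, hq, hq1⟩ : p.1 ∈ symDom (pairingUpTo s t s.length) := hdom ▸ hs
    exact Or.inr (hbij.eq_of_fst_eq hp (hsub hq) hq1.symm ▸ hq)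
  · exact Or.inl (hbij.eq_of_fst_eq hp hab (List.mem_singleton.1 ha))

end PlaySymOf

theorem ptrOf_eq_of_immOf (A : ArenaS α) {s : List α} {i j : ℕ} {m b : α} (hs : s.Nodup)
    (hm : s[i]? = some m) (hb : s[j]? = some b) (hij : i < j) (h : immOf A.le m b) :
    ptrOf A.le s j = i := by
  have hex : ∃ i, i < j ∧ ∃ a b, s[i]? = some a ∧ s[j]? = some b ∧ immOf A.le a b :=
    ⟨i, hij, m, b, hm, hb, h⟩
  obtain ⟨-, m', b', hm', hb', h'⟩ := hex.choose_spec
  obtain rfl : b' = b := Option.some.inj (hb'.symm.trans hb)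
  obtain rfl : m' = m := A.immOf_unique h' h
  rw [ptrOf, dif_pos hex]
  exact hs.eq_of_getElem?_eq_some hm' hm

theorem AltPlayOf.exists_immOf_index {A : ArenaS α} {s : List α}
    (hs : AltPlayOf A.le A.conflict A.pol s) {j : ℕ} {b : α} (hb : s[j]? = some b)
    (hmin : ¬ MinimalOf A.le b) : ∃ i < j, ∃ m, s[i]? = some m ∧ immOf A.le m b := by
  obtain ⟨m, hm⟩ := A.exists_immOf_of_not_minimalOf hmin
  have hbmem : b ∈ s.take (j + 1) :=
    List.mem_iff_getElem?.2 ⟨j, by rw [List.getElem?_take, if_pos j.lt_succ_self, hb]⟩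
  obtain ⟨i, hi⟩ := List.mem_iff_getElem?.1 ((hs.1 _ (List.take_prefix _ _)).2.1 b hbmem m hm.1)
  rw [List.getElem?_take] at hi
  split_ifs at hi with hij
  refine ⟨i, lt_of_le_of_ne (Nat.lt_succ_iff.1 hij) ?_, m, hi, hm⟩
  rintro rfl
  exact hm.2.1 (Option.some.inj (hi.symm.trans hb))

namespace PImageEq

variable {C : Concrete α β} {s t : List α}

theorem length_eq (h : PImageEq C s t) : s.length = t.length := by
  simpa using congrArg List.length h.1

theorem lbl_eq (h : PImageEq C s t) {i : ℕ} {a b : α} (ha : s[i]? = some a)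
    (hb : t[i]? = some b) : C.lbl a = C.lbl b := by
  have hi := congrArg (·[i]?) h.1
  simp only [List.getElem?_map, ha, hb, Option.map_some] at hi
  exact Option.some.inj hi

theorem minimalOf_iff (h : PImageEq C s t) {i : ℕ} {a b : α} (ha : s[i]? = some a)
    (hb : t[i]? = some b) : MinimalOf C.A.le a ↔ MinimalOf C.A.le b := by
  rw [← C.minimalOf_lbl_iff, h.lbl_eq ha hb, C.minimalOf_lbl_iff]

theorem symm (h : PImageEq C s t) : PImageEq C t s := by
  refine ⟨h.1.symm, fun j b hb hmin => ?_⟩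
  obtain ⟨a, ha⟩ := List.exists_getElem?_eq_some_of_length_eq h.length_eq.symm hb
  exact (h.2 j a ha (by rwa [h.minimalOf_iff ha hb])).symm

theorem le_of_le (hs : AltPlayOf C.A.le C.A.conflict C.A.pol s)
    (ht : AltPlayOf C.A.le C.A.conflict C.A.pol t) (h : PImageEq C s t) {i j : ℕ}
    {a b a' b' : α} (ha : s[i]? = some a)
    (hb : s[j]? = some b) (ha' : t[i]? = some a') (hb' : t[j]? = some b')
    (hab : C.A.le a b) : C.A.le a' b' := by
  induction j using Nat.strong_induction_on generalizing b b' with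
  | _ j IH =>
  by_cases heq : a = b
  · subst heq
    obtain rfl := hs.2.1.eq_of_getElem?_eq_some ha hb
    obtain rfl := Option.some.inj (ha'.symm.trans hb')
    exact C.A.le_refl _
  -- `b` points to the same position `p` in both plays, and `a ≤ b` factors through `s[p]`
  have hbmin : ¬ MinimalOf C.A.le b := fun hmin => heq (hmin a hab)
  obtain ⟨p, hpj, m, hm, hmb⟩ := hs.exists_immOf_index hb hbmin
  obtain ⟨p', hp'j, m', hm', hmb'⟩ :=
    ht.exists_immOf_index hb' (by rwa [← h.minimalOf_iff hb hb'])
  obtain rfl : p' = p := by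
    rw [← ptrOf_eq_of_immOf C.A ht.2.1 hm' hb' hp'j hmb', ← h.2 j b hb hbmin,
      ptrOf_eq_of_immOf C.A hs.2.1 hm hb hpj hmb]
  have ham : C.A.le a m := by
    rcases C.A.forestial hab hmb.1 with ham | hma
    · exact ham
    · obtain rfl := (hmb.2.2 a hma hab).resolve_right heq
      exact C.A.le_refl _
  exact C.A.le_trans (IH p' hpj hm hm' ham) hmb'.1

theorem playSymOf (hs : AltPlayOf C.A.le C.A.conflict C.A.pol s)
    (ht : AltPlayOf C.A.le C.A.conflict C.A.pol t) (h : PImageEq C s t) :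
    PlaySymOf C.A.Sym s t := by
  refine ⟨h.length_eq, fun k hk => ?_⟩
  have hdom := symDom_pairingUpTo (s := s) (h.length_eq ▸ hk) ▸ hs.1 _ (List.take_prefix k s)
  have hcod := symCod_pairingUpTo (t := t) hk ▸ ht.1 _ (List.take_prefix k t)
  refine (C.transparent _ (isBijGraph_pairingUpTo hs.2.1 ht.2.1 k) hdom hcod).2 ⟨?_, ?_⟩
  · rintro ⟨x, x'⟩ ⟨i, -, h1, h2⟩ ⟨y, y'⟩ ⟨j, -, h3, h4⟩
    exact ⟨h.le_of_le hs ht h1 h3 h2 h4, h.symm.le_of_le ht hs h2 h4 h1 h3⟩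
  · rintro ⟨x, x'⟩ ⟨i, -, h1, h2⟩
    exact h.lbl_eq h1 h2

end PImageEq

theorem PlaySymOf.pImageEq {C : Concrete α β} {s t : List α}
    (hs : AltPlayOf C.A.le C.A.conflict C.A.pol s) (ht : AltPlayOf C.A.le C.A.conflict C.A.pol t)
    (h : PlaySymOf C.A.Sym s t) : PImageEq C s t := by
  have hθ := h.2 _ le_rfl
  have mem : ∀ {i x y}, s[i]? = some x → t[i]? = some y →
      (x, y) ∈ pairingUpTo s t s.length :=
    fun hx hy => ⟨_, (List.getElem?_eq_some_iff.1 hx).1, hx, hy⟩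
  refine ⟨List.ext_getElem? fun i => ?_, fun j b hb hmin => ?_⟩
  · simp only [List.getElem?_map]
    cases hx : s[i]? with
    | none => rw [List.getElem?_eq_none (h.1 ▸ List.getElem?_eq_none_iff.1 hx)]
    | some x =>
      obtain ⟨y, hy⟩ := List.exists_getElem?_eq_some_of_length_eq h.1 hx
      rw [hy]
      exact congrArg some (Concrete.lbl_eq_of_mem_sym hθ (mem hx hy))
  · obtain ⟨i, hij, m, hm, hmb⟩ := hs.exists_immOf_index hb hmin
    obtain ⟨b', hb'⟩ := List.exists_getElem?_eq_some_of_length_eq h.1 hb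
    obtain ⟨m', hm'⟩ := List.exists_getElem?_eq_some_of_length_eq h.1 hm
    rw [ptrOf_eq_of_immOf C.A hs.2.1 hm hb hij hmb, ptrOf_eq_of_immOf C.A ht.2.1 hm' hb' hij
      (Concrete.immOf_of_mem_sym hθ (mem hm hm') (mem hb hb') hmb)]

theorem playSymOf_iff_pImageEq {C : Concrete α β} {s t : List α}
    (hs : AltPlayOf C.A.le C.A.conflict C.A.pol s) (ht : AltPlayOf C.A.le C.A.conflict C.A.pol t) :
    PlaySymOf C.A.Sym s t ↔ PImageEq C s t :=
  ⟨PlaySymOf.pImageEq hs ht, PImageEq.playSymOf hs ht⟩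

/-- The →-simulation and →-receptivity clauses of `UnifOf`, which transfer plays from `σ`
to `τ`. -/
def SimulatesOf (Sym : Set (Set (α × α))) (pol : α → Bool) (σ τ : Set (List α)) : Prop :=
  (∀ (s : List α) (a : α), pol a = true → s ++ [a] ∈ σ → ∀ t ∈ τ, PlaySymOf Sym s t →
      ∃ b, pol b = true ∧ t ++ [b] ∈ τ ∧ PlaySymOf Sym (s ++ [a]) (t ++ [b])) ∧
  (∀ (s t : List α) (a b : α), pol a = false → s ++ [a] ∈ σ → t ∈ τ →
      PlaySymOf Sym (s ++ [a]) (t ++ [b]) → t ++ [b] ∈ τ)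

variable {A : ArenaS α} {σ τ : Set (List α)}

theorem unifOf_iff_simulatesOf :
    UnifOf A.Sym A.pol σ τ ↔
      SimulatesOf A.Sym A.pol σ τ ∧ SimulatesOf A.Sym A.pol τ σ := by
  constructor
  · rintro ⟨hsim, hsim', hrec, hrec'⟩
    refine ⟨⟨hsim, hrec⟩, fun t b hb htb s hs hts => ?_,
      fun t s b a hb htb hs hsym => hrec' s t a b hb htb hs hsym.symm⟩
    obtain ⟨a, ha, hsa, hsym⟩ := hsim' t b hb htb s hs hts.symm
    exact ⟨a, ha, hsa, hsym.symm⟩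
  · rintro ⟨⟨hsim, hrec⟩, hsim', hrec'⟩
    refine ⟨hsim, fun t b hb htb s hs hst => ?_, hrec,
      fun s t a b hb htb hs hsym => hrec' t s b a hb htb hs hsym.symm⟩
    obtain ⟨a, ha, hsa, hsym⟩ := hsim' t b hb htb s hs hst.symm
    exact ⟨a, ha, hsa, hsym.symm⟩

theorem SimulatesOf.exists_playSymOf (hσ : PrestratOf A.le A.conflict A.pol σ) (hτ : [] ∈ τ)
    (h : SimulatesOf A.Sym A.pol σ τ) : ∀ s ∈ σ, ∃ t ∈ τ, PlaySymOf A.Sym s t := by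
  intro s
  induction s using List.reverseRecOn with
  | nil => exact fun _ => ⟨[], hτ, A.playSymOf_nil⟩
  | append_singleton s a IH =>
    intro hsa
    obtain ⟨t, ht, hst⟩ := IH (hσ.2.1 _ _ (List.prefix_append s [a]) hsa)
    cases hpol : A.pol a
    · obtain ⟨b, hsym⟩ :=
        hst.exists_append_singleton ((hσ.2.2.1 _ hsa).1 _ (List.prefix_refl _))
      exact ⟨t ++ [b], h.2 s t a b hpol hsa ht hsym, hsym⟩
    · obtain ⟨b, -, htb, hsym⟩ := h.1 s a hpol hsa t ht hst
      exact ⟨t ++ [b], htb, hsym⟩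

theorem simulatesOf_of_forall_exists_playSymOf (hσ : PrestratOf A.le A.conflict A.pol σ)
    (hτ : PrestratOf A.le A.conflict A.pol τ) (hττ : SimulatesOf A.Sym A.pol τ τ)
    (H : ∀ s ∈ σ, ∃ t ∈ τ, PlaySymOf A.Sym s t) : SimulatesOf A.Sym A.pol σ τ := by
  -- a move of `σ` is transferred through its symmetric partner in `τ` using `τ ≈ τ`
  have partner : ∀ s a, s ++ [a] ∈ σ →
      ∃ u c, u ++ [c] ∈ τ ∧ PlaySymOf A.Sym (s ++ [a]) (u ++ [c]) := by
    intro s a hsa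
    obtain ⟨u, hu, hsu⟩ := H _ hsa
    rcases u.eq_nil_or_concat' with rfl | ⟨u, c, rfl⟩
    · simpa using hsu.1
    · exact ⟨u, c, hu, hsu⟩
  constructor
  · intro s a ha hsa t ht hst
    obtain ⟨u, c, huc, hsym⟩ := partner s a hsa
    have hs : s.Nodup := (hσ.2.2.1 _ hsa).2.1.sublist (List.sublist_append_left _ _)
    have hut := (playSymOf_append_singleton_iff.1 hsym).1.symm.trans hs hst
    obtain ⟨b, hb, htb, hsym'⟩ := hττ.1 u c (hsym.pol_eq.symm.trans ha) huc t ht hut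
    exact ⟨b, hb, htb, hsym.trans (hτ.2.2.1 _ huc).2.1 hsym'⟩
  · intro s t a b ha hsa ht hsym
    obtain ⟨u, c, huc, hsym'⟩ := partner s a hsa
    exact hττ.2 u t c b (hsym'.pol_eq.symm.trans ha) huc ht
      (hsym'.symm.trans (hσ.2.2.1 _ hsa).2.1 hsym)

theorem simulatesOf_iff_forall_exists_playSymOf (hσ : PrestratOf A.le A.conflict A.pol σ)
    (hτ : PrestratOf A.le A.conflict A.pol τ) (hττ : SimulatesOf A.Sym A.pol τ τ) :
    SimulatesOf A.Sym A.pol σ τ ↔ ∀ s ∈ σ, ∃ t ∈ τ, PlaySymOf A.Sym s t :=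
  ⟨fun h => h.exists_playSymOf hσ hτ.1, simulatesOf_of_forall_exists_playSymOf hσ hτ hττ⟩

end

/-- For a concrete arena, two (uniform) alternating prestrategies `σ, τ` satisfy
`σ ≈ τ` if and only if their pointer collapses coincide: `𝒫(σ) = 𝒫(τ)`. -/
theorem uniformity_iff_pointer_collapse {α β : Type} (C : Concrete α β)
    (σ τ : Set (List α))
    (hσ : PrestratOf C.A.le C.A.conflict C.A.pol σ)
    (hτ : PrestratOf C.A.le C.A.conflict C.A.pol τ)
    (hσuni : UnifOf C.A.Sym C.A.pol σ σ)
    (hτuni : UnifOf C.A.Sym C.A.pol τ τ) :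
    UnifOf C.A.Sym C.A.pol σ τ ↔
      ((∀ s ∈ σ, ∃ t ∈ τ, PImageEq C s t) ∧ (∀ t ∈ τ, ∃ s ∈ σ, PImageEq C s t)) := by
  have hσσ := (unifOf_iff_simulatesOf.1 hσuni).1
  have hττ := (unifOf_iff_simulatesOf.1 hτuni).1
  have key : ∀ {s t}, s ∈ σ → t ∈ τ → (PlaySymOf C.A.Sym s t ↔ PImageEq C s t) :=
    fun hs ht => playSymOf_iff_pImageEq (hσ.2.2.1 _ hs) (hτ.2.2.1 _ ht)
  rw [unifOf_iff_simulatesOf, simulatesOf_iff_forall_exists_playSymOf hσ hτ hττ,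
    simulatesOf_iff_forall_exists_playSymOf hτ hσ hσσ]
  refine and_congr (forall₂_congr fun s hs => exists_congr fun t => and_congr_right (key hs ·))
    (forall₂_congr fun t ht => exists_congr fun s => and_congr_right fun hs => ?_)
  exact ⟨fun h => (key hs ht).1 h.symm, fun h => ((key hs ht).2 h).symm⟩
end

section
/- Let s be an alternating play on an arena that is both P-visible and O-visible, containing a move s_j pointing to an earlier move s_i such that no later move points to s_j. Then no move of s occurring after s_j points to any move in the segment s_i ... s_j. -/
set_option autoImplicit false

/-- An arena: an event structure with polarities (`true` = Player `+`,
`false` = Opponent `−`) which is alternating, forestial and race-free. -/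
structure Arena (α : Type) where
  le : α → α → Prop
  conflict : α → α → Prop
  pol : α → Bool
  le_refl : ∀ e, le e e
  le_trans : ∀ {a b c : α}, le a b → le b c → le a c
  le_antisymm : ∀ {a b : α}, le a b → le b a → a = b
  finite_causes : ∀ e : α, Set.Finite {e' | le e' e}
  conflict_irrefl : ∀ e, ¬ conflict e e
  conflict_symm : ∀ {a b : α}, conflict a b → conflict b a
  conflict_inherit : ∀ {a b b' : α}, conflict a b → le b b' → conflict a b'
  alternating : ∀ {a b : α}, immOf le a b → pol a ≠ pol b
  forestial : ∀ {a1 a2 a : α}, le a1 a → le a2 a → le a1 a2 ∨ le a2 a1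
  race_free : ∀ {a1 a2 : α}, conflict a1 a2 →
    (∀ a1' a2', le a1' a1 → le a2' a2 → conflict a1' a2' → a1' = a1 ∧ a2' = a2) →
    pol a1 = pol a2

/-- The P-view relation: `PViewRelOf le pol s v` holds when `v = ⌈s⌉`, following
the inductive clauses `⌈ε⌉ = ε`, `⌈s a⁺⌉ = ⌈s⌉ a⁺`, `⌈s a1⁺ s' a2⁻⌉ = ⌈s⌉ a1 a2`
when `a1 ⋗ a2`, and `⌈t a2⁻⌉ = a2` when `a2` is negative minimal. -/
inductive PViewRelOf {α : Type} (le : α → α → Prop) (pol : α → Bool) :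
    List α → List α → Prop
  | nil : PViewRelOf le pol [] []
  | pos {s v : List α} {a : α} : pol a = true → PViewRelOf le pol s v →
      PViewRelOf le pol (s ++ [a]) (v ++ [a])
  | negMin {t : List α} {a : α} : pol a = false → MinimalOf le a →
      PViewRelOf le pol (t ++ [a]) [a]
  | neg {s s' v : List α} {a1 a2 : α} : pol a1 = true → pol a2 = false →
      immOf le a1 a2 → PViewRelOf le pol (s ++ [a1]) v →
      PViewRelOf le pol (s ++ a1 :: s' ++ [a2]) (v ++ [a2])

/-- The O-view relation, dual to the P-view: Opponent moves extend the view and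
positive moves reset it to their justifier's view. -/
inductive OViewRelOf {α : Type} (le : α → α → Prop) (pol : α → Bool) :
    List α → List α → Prop
  | nil : OViewRelOf le pol [] []
  | neg {s v : List α} {a : α} : pol a = false → OViewRelOf le pol s v →
      OViewRelOf le pol (s ++ [a]) (v ++ [a])
  | pos {s s' v : List α} {a1 a2 : α} : pol a1 = false → pol a2 = true →
      immOf le a1 a2 → OViewRelOf le pol (s ++ [a1]) v →
      OViewRelOf le pol (s ++ a1 :: s' ++ [a2]) (v ++ [a2])

/-- A play is P-visible when the P-views of all its prefixes are plays. -/
def PVisiblePlay {α : Type} (A : Arena α) (s : List α) : Prop :=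
  ∀ t v : List α, t <+: s → PViewRelOf A.le A.pol t v →
    AltPlayOf A.le A.conflict A.pol v

/-- A play is O-visible when the O-views of all its prefixes are plays. -/
def OVisiblePlay {α : Type} (A : Arena α) (s : List α) : Prop :=
  ∀ t v : List α, t <+: s → OViewRelOf A.le A.pol t v →
    AltPlayOf A.le A.conflict A.pol v


/-!
Induct on the position `k` of a move `s_k` pointing to some `s_l` with `i ≤ l ≤ j`. If `s_k` is
a Player move, P-visibility puts `s_l` in the P-view of `s_{<k}`. Read backwards, that view
steps from a Player move to its predecessor and from an Opponent move to its justifier; by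
induction no move between `s_j` and `s_k` has its justifier in the segment, so the view can only
enter the segment by stepping from `s_{j+1}` onto `s_j`, which is then an Opponent move and is
followed in the view by its justifier `s_i` and moves before it. Hence `s_l` is `s_j`, excluded
by hypothesis, or `s_i` with `s_j` an Opponent move; but then `s_i` justifies both the
Opponent move `s_j` and the Player move `s_k`, contradicting alternation of the arena.
Opponent moves `s_k` are handled by the same argument in the dual arena, whose P-views are the
O-views of `A` because `A` is negative.
-/

section SegmentLemma

variable {α : Type}

namespace Arena

def dual (A : Arena α) : Arena α where
  le := A.le
  conflict := A.conflict
  pol a := !A.pol a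
  le_refl := A.le_refl
  le_trans := A.le_trans
  le_antisymm := A.le_antisymm
  finite_causes := A.finite_causes
  conflict_irrefl := A.conflict_irrefl
  conflict_symm := A.conflict_symm
  conflict_inherit := A.conflict_inherit
  alternating h := by simpa using A.alternating h
  forestial := A.forestial
  race_free h hmin := by simp [A.race_free h hmin]

variable (A : Arena α)

theorem exists_immOf_of_not_minimal {b : α} (hb : ¬ MinimalOf A.le b) :
    ∃ a, immOf A.le a b := by
  let : LE α := ⟨A.le⟩
  have : IsTrans α (· ≤ ·) := ⟨fun _ _ _ => A.le_trans⟩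
  obtain ⟨a, hab, hne⟩ : ∃ a, A.le a b ∧ a ≠ b := by simpa [MinimalOf] using hb
  obtain ⟨m, ⟨hmb, hmne⟩, hmax⟩ :=
    ((A.finite_causes b).subset fun e (he : A.le e b ∧ e ≠ b) => he.1).exists_maximal
      ⟨a, hab, hne⟩
  refine ⟨m, hmb, hmne, fun c hmc hcb => ?_⟩
  by_cases hc : c = b
  · exact .inr hc
  · exact .inl (A.le_antisymm (hmax ⟨hcb, hc⟩ hmc) hmc)

theorem immOf_unique {a a' b : α} (h : immOf A.le a b) (h' : immOf A.le a' b) : a = a' := by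
  rcases A.forestial h.1 h'.1 with hle | hle
  · exact ((h.2.2 a' hle h'.1).resolve_right h'.2.1).symm
  · exact (h'.2.2 a hle h.1).resolve_right h.2.1

end Arena

theorem List.Nodup.eq_of_getElem?_eq {s : List α} (hnd : s.Nodup) {q l : ℕ} {a : α}
    (hq : s[q]? = some a) (hl : s[l]? = some a) : q = l :=
  (List.getElem?_inj (List.getElem?_eq_some_iff.mp hq).1 hnd).mp (hq.trans hl.symm)

theorem List.Nodup.lt_of_mem_take {s : List α} (hnd : s.Nodup) {l n : ℕ} {x : α}
    (hl : s[l]? = some x) (hx : x ∈ s.take n) : l < n := by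
  obtain ⟨q, hq, rfl⟩ := List.mem_take_iff_getElem.mp hx
  have := hnd.eq_of_getElem?_eq (List.getElem?_eq_getElem (by omega)) hl
  omega

def IsDownClosed (le : α → α → Prop) (t : List α) : Prop :=
  ∀ e ∈ t, ∀ e', le e' e → e' ∈ t

theorem AltPlayOf.isDownClosed {le conflict : α → α → Prop} {pol : α → Bool} {s : List α}
    (h : AltPlayOf le conflict pol s) : IsDownClosed le s :=
  (h.1 s List.prefix_rfl).2.1

def IsAlternating (pol : α → Bool) (s : List α) : Prop :=
  ∀ m a b, s[m]? = some a → s[m + 1]? = some b → pol a ≠ pol b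

theorem IsAlternating.bnot {pol : α → Bool} {s : List α} (h : IsAlternating pol s) :
    IsAlternating (fun a => !pol a) s :=
  fun m a b ha hb => by simpa using h m a b ha hb

theorem IsAlternating.lt_or_pol_eq_false {pol : α → Bool} {s : List α}
    (halt : IsAlternating pol s) {j n : ℕ} {sj b : α} (hj : s[j]? = some sj) (hjn : j ≤ n)
    (hb : s[n + 1]? = some b) (hpb : pol b = true) : j < n ∨ pol sj = false := by
  rcases hjn.lt_or_eq with h | rfl
  · exact .inl h
  · exact .inr (by simpa [hpb] using halt j sj b hj hb)

def NoPointerIntoSegment (le : α → α → Prop) (s : List α) (i j n : ℕ) : Prop :=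
  ∀ k l b a, j < k → k ≤ n → i ≤ l → l ≤ j → s[k]? = some b → s[l]? = some a →
    ¬ immOf le a b

theorem NoPointerIntoSegment.mono {le : α → α → Prop} {s : List α} {i j m n : ℕ}
    (h : NoPointerIntoSegment le s i j n) (hmn : m ≤ n) : NoPointerIntoSegment le s i j m :=
  fun k l b a hjk hkm => h k l b a hjk (hkm.trans hmn)

section Views

variable {le : α → α → Prop} {p : α → Bool}

theorem PViewRelOf.subset {t v : List α} (h : PViewRelOf le p t v) : v ⊆ t := by
  induction h with
  | nil => exact List.Subset.refl _
  | pos _ _ ih =>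
    exact List.append_subset.mpr
      ⟨List.Subset.trans ih (List.subset_append_left _ _), List.subset_append_right _ _⟩
  | negMin _ _ => simp
  | neg _ _ _ _ ih =>
    intro x hx
    rcases List.mem_append.mp hx with hx | hx
    · rcases List.mem_append.mp (ih hx) with hx | hx <;> simp_all
    · simp_all

theorem PViewRelOf.mem_of_append_singleton {t V : List α} {b : α}
    (h : PViewRelOf le p (t ++ [b]) V) : b ∈ V := by
  generalize ht : t ++ [b] = T at h
  cases h with
  | nil => simp at ht
  | _ =>
    obtain ⟨-, hb⟩ := List.append_inj' ht rfl
    simp_all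

theorem PViewRelOf.mem_take_add_one {s V : List α} {m : ℕ} {b x : α} (hb : s[m]? = some b)
    (hV : PViewRelOf le p (s.take (m + 1)) V) (hx : x ∈ V) :
    x = b ∨
    (p b = true ∧ ∃ V', PViewRelOf le p (s.take m) V' ∧ x ∈ V') ∨
    (p b = false ∧ ∃ q < m, ∃ a, s[q]? = some a ∧ immOf le a b ∧
      ∃ V', PViewRelOf le p (s.take (q + 1)) V' ∧ x ∈ V') := by
  generalize hT : s.take (m + 1) = T at hV
  rw [List.take_add_one, hb, Option.toList_some] at hT
  cases hV with
  | nil => simp at hT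
  | pos hpb hv =>
    obtain ⟨rfl, hab⟩ := List.append_inj' hT rfl
    obtain rfl : b = _ := by simpa using hab
    rcases List.mem_append.mp hx with hx | hx
    · exact .inr (.inl ⟨hpb, _, hv, hx⟩)
    · exact .inl (by simpa using hx)
  | negMin _ _ =>
    obtain ⟨-, hab⟩ := List.append_inj' hT rfl
    simp_all
  | @neg u s' v a₁ a₂ hpa₁ hpa₂ himm hv =>
    obtain ⟨hu, hab⟩ := List.append_inj' hT rfl
    obtain rfl : b = a₂ := by simpa using hab
    rcases List.mem_append.mp hx with hx | hx
    · have hpre : u ++ [a₁] <+: s :=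
        (List.prefix_append_right_inj u).mpr (by simp) |>.trans (hu ▸ List.take_prefix m s)
      have htake : s.take (u.length + 1) = u ++ [a₁] := by
        simpa using (List.prefix_iff_eq_take.mp hpre).symm
      have hq : s[u.length]? = some a₁ := by
        simpa [List.getElem?_take] using congrArg (·[u.length]?) htake
      have hlt : u.length < m := by
        have hlen := congrArg List.length hu
        have := (List.getElem?_eq_some_iff.mp hb).1
        simp only [List.length_take, List.length_append, List.length_cons] at hlen
        omega
      exact .inr (.inr ⟨hpa₂, u.length, hlt, a₁, hq, himm, v, htake ▸ hv, hx⟩)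
    · exact .inl (by simpa using hx)

end Views

theorem PViewRelOf.toOViewRelOf_of_dual {A : Arena α}
    (hneg : ∀ a, MinimalOf A.le a → A.pol a = false) {t v : List α}
    (h : PViewRelOf A.le A.dual.pol t v) : OViewRelOf A.le A.pol t v := by
  induction h with
  | nil => exact .nil
  | pos hpa _ ih => exact .neg (by simpa [Arena.dual] using hpa) ih
  | negMin hpa hmin => simp [Arena.dual, hneg _ hmin] at hpa
  | neg h1 h2 himm _ ih =>
    exact .pos (by simpa [Arena.dual] using h1) (by simpa [Arena.dual] using h2) himm ih

namespace Arena

variable (A : Arena α)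

theorem exists_pViewRelOf {t : List α} (ht : ∀ u, u <+: t → IsDownClosed A.le u) :
    ∃ v, PViewRelOf A.le A.pol t v := by
  induction hn : t.length using Nat.strong_induction_on generalizing t with
  | _ n ih =>
  subst hn
  rcases List.eq_nil_or_concat' t with rfl | ⟨u, a, rfl⟩
  · exact ⟨[], .nil⟩
  cases hpa : A.pol a with
  | true =>
    obtain ⟨v, hv⟩ := ih u.length (by simp)
      (fun w hw => ht w (hw.trans (List.prefix_append _ _))) rfl
    exact ⟨v ++ [a], .pos hpa hv⟩
  | false =>
    by_cases hmin : MinimalOf A.le a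
    · exact ⟨[a], .negMin hpa hmin⟩
    obtain ⟨c, hc⟩ := A.exists_immOf_of_not_minimal hmin
    have hpc : A.pol c = true := by simpa [hpa] using A.alternating hc
    have hcu : c ∈ u := by
      simpa [hc.2.1] using ht _ List.prefix_rfl a (by simp) c hc.1
    obtain ⟨u₁, u₂, rfl⟩ := List.append_of_mem hcu
    obtain ⟨v, hv⟩ := ih (u₁ ++ [c]).length (by simp)
      (fun w hw => ht w (hw.trans ⟨u₂ ++ [a], by simp⟩)) rfl
    exact ⟨v ++ [a], by simpa using PViewRelOf.neg (s' := u₂) hpc hpa hc hv⟩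

-- The P-view of `s_{≤m}` meets the segment `s_i … s_j` only in `s_j` and, when `s_j` is an
-- Opponent move, in its justifier `s_i`.
theorem eq_or_eq_of_mem_pViewRelOf {s : List α} (hnd : s.Nodup) (halt : IsAlternating A.pol s)
    {i j : ℕ} {si sj : α} (hi : s[i]? = some si) (hj : s[j]? = some sj)
    (hptr : immOf A.le si sj) (m : ℕ) (hm : m < s.length) (hjm : j ≤ m)
    (hgap : NoPointerIntoSegment A.le s i j m) (hcond : j < m ∨ A.pol sj = false)
    {V : List α} (hV : PViewRelOf A.le A.pol (s.take (m + 1)) V) {l : ℕ} {x : α}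
    (hil : i ≤ l) (hlj : l ≤ j) (hl : s[l]? = some x) (hx : x ∈ V) :
    l = j ∨ (l = i ∧ A.pol sj = false) := by
  induction m using Nat.strong_induction_on generalizing V with
  | _ m ih =>
  obtain ⟨b, hb⟩ : ∃ b, s[m]? = some b := ⟨_, List.getElem?_eq_getElem hm⟩
  rcases hV.mem_take_add_one hb hx with
    rfl | ⟨hpb, V', hV', hx'⟩ | ⟨hpb, q, hqm, a, hq, hab, V', hV', hx'⟩
  · have := hnd.eq_of_getElem?_eq hl hb
    omega
  · rcases hjm.lt_or_eq with hjm | rfl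
    · obtain ⟨n, rfl⟩ : ∃ n, m = n + 1 := ⟨m - 1, by omega⟩
      exact ih n (by omega) (by omega) (by omega) (hgap.mono (by omega))
        (halt.lt_or_pol_eq_false hj (by omega) hb hpb) hV' hx'
    · obtain rfl : b = sj := Option.some.inj (hb.symm.trans hj)
      simp [hpb] at hcond
  · rcases hjm.lt_or_eq with hjm | rfl
    · have hq' : q < i ∨ j < q := by
        by_contra! h
        exact hgap m q b a hjm le_rfl h.1 h.2 hb hq hab
      rcases hq' with hqi | hjq
      · have := hnd.lt_of_mem_take hl (hV'.subset hx')
        omega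
      · exact ih q hqm (by omega) hjq.le (hgap.mono hqm.le) (.inl hjq) hV' hx'
    · obtain rfl : b = sj := Option.some.inj (hb.symm.trans hj)
      obtain rfl : a = si := A.immOf_unique hab hptr
      have hqi : q = i := hnd.eq_of_getElem?_eq hq hi
      have := hnd.lt_of_mem_take hl (hV'.subset hx')
      exact .inr ⟨by omega, hpb⟩

theorem not_immOf_segment_of_pos {s : List α} (hnd : s.Nodup) (halt : IsAlternating A.pol s)
    (hprefix : ∀ t, t <+: s → IsDownClosed A.le t)
    (hviews : ∀ t v, t <+: s → PViewRelOf A.le A.pol t v → IsDownClosed A.le v)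
    {i j n l : ℕ} {si sj a b : α} (hi : s[i]? = some si) (hj : s[j]? = some sj)
    (hptr : immOf A.le si sj) (hjn : j ≤ n) (hgap : NoPointerIntoSegment A.le s i j n)
    (hb : s[n + 1]? = some b) (hpb : A.pol b = true) (hjb : ¬ immOf A.le sj b)
    (hl : s[l]? = some a) (hil : i ≤ l) (hlj : l ≤ j) : ¬ immOf A.le a b := by
  intro hab
  obtain ⟨V, hV⟩ :=
    A.exists_pViewRelOf fun u hu => hprefix u (hu.trans (List.take_prefix (n + 1 + 1) s))
  have hbV : b ∈ V := by
    rw [List.take_add_one, hb, Option.toList_some] at hV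
    exact hV.mem_of_append_singleton
  have haV : a ∈ V := hviews _ V (List.take_prefix _ s) hV b hbV a hab.1
  rcases hV.mem_take_add_one hb haV with rfl | ⟨-, V', hV', haV'⟩ | ⟨hpb', -⟩
  · exact hab.2.1 rfl
  · have hn : n < s.length := by
      have := (List.getElem?_eq_some_iff.mp hb).1
      omega
    rcases A.eq_or_eq_of_mem_pViewRelOf hnd halt hi hj hptr n hn hjn hgap
        (halt.lt_or_pol_eq_false hj hjn hb hpb) hV' hil hlj hl haV' with rfl | ⟨rfl, hpsj⟩
    · obtain rfl : a = sj := Option.some.inj (hl.symm.trans hj)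
      exact hjb hab
    · obtain rfl : a = si := Option.some.inj (hl.symm.trans hi)
      have h₁ := A.alternating hab
      have h₂ := A.alternating hptr
      simp_all
  · simp [hpb] at hpb'

end Arena

end SegmentLemma

theorem segment_lemma_general {α : Type} (A : Arena α)
    (hneg : ∀ a : α, MinimalOf A.le a → A.pol a = false)
    (s : List α) (hplay : AltPlayOf A.le A.conflict A.pol s)
    (hP : PVisiblePlay A s) (hO : OVisiblePlay A s)
    (i j : ℕ) (si sj : α) (hi : s[i]? = some si) (hj : s[j]? = some sj)
    (hptr : immOf A.le si sj)
    (hnolater : ∀ (k : ℕ) (b : α), j < k → s[k]? = some b → ¬ immOf A.le sj b) :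
    ∀ (k l : ℕ) (b a : α), j < k → i ≤ l → l ≤ j →
      s[k]? = some b → s[l]? = some a → ¬ immOf A.le a b := by
  obtain ⟨hconfig, hnd, halt, -⟩ := hplay
  have hdown : ∀ t, t <+: s → IsDownClosed A.le t := fun t ht => (hconfig t ht).2.1
  have hsegment : ∀ n, NoPointerIntoSegment A.le s i j n := by
    intro n
    induction n with
    | zero => intro k _ _ _ hjk hk; omega
    | succ n ih =>
      intro k l b a hjk hkn hil hlj hb hl
      rcases hkn.lt_or_eq with hkn | rfl
      · exact ih k l b a hjk (by omega) hil hlj hb hl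
      cases hpb : A.pol b with
      | true =>
        exact A.not_immOf_segment_of_pos hnd halt hdown
          (fun t v ht hv => (hP t v ht hv).isDownClosed)
          hi hj hptr (by omega) ih hb hpb (hnolater _ b hjk hb) hl hil hlj
      | false =>
        exact A.dual.not_immOf_segment_of_pos hnd (IsAlternating.bnot halt) hdown
          (fun t v ht hv => (hO t v ht (hv.toOViewRelOf_of_dual hneg)).isDownClosed)
          hi hj hptr (by omega) ih hb (by simp [Arena.dual, hpb]) (hnolater _ b hjk hb)
          hl hil hlj
  exact fun k l b a hjk => hsegment k k l b a hjk le_rfl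

/-- Segment lemma: in a P-visible and O-visible alternating play `s` on a negative
arena, if `s_j` points to `s_i` and no later move points to `s_j`, then no move of
`s` occurring after `s_j` points to any move in the segment `s_i ... s_j`. -/
theorem segment_lemma {α : Type} (A : Arena α)
    (hneg : ∀ a : α, MinimalOf A.le a → A.pol a = false)
    (s : List α) (hplay : AltPlayOf A.le A.conflict A.pol s)
    (hP : PVisiblePlay A s) (hO : OVisiblePlay A s)
    (i j : ℕ) (si sj : α) (hi : s[i]? = some si) (hj : s[j]? = some sj)
    (hij : i < j) (hptr : immOf A.le si sj)
    (hnolater : ∀ (k : ℕ) (b : α), j < k → s[k]? = some b → ¬ immOf A.le sj b) :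
    ∀ (k l : ℕ) (b a : α), j < k → i ≤ l → l ≤ j →
      s[k]? = some b → s[l]? = some a → ¬ immOf A.le a b :=
  segment_lemma_general A hneg s hplay hP hO i j si sj hi hj hptr hnolater
end
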